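/- For every n ≥ 1 there exists a matrix A ∈ {0,1}^{r×d} with d = 2n² columns such that the Boolean quadratic polytope conv(BQP_n) is affinely equivalent to the set partition polytope conv(PART(A)): there is an injective affine map φ : ℝ^{Δ_n} → ℝ^{2n²} with φ(conv(BQP_n)) = conv(PART(A)). -/

import Mathlib

/-- Index set `Δ_n = {(i,j) : 1 ≤ i ≤ j ≤ n}` for Boolean quadratic polytopes. -/
def Idx (n : ℕ) : Type := {p : Fin n × Fin n // p.1 ≤ p.2}

/-- The vertex set of the Boolean quadratic polytope. -/
def BQP (n : ℕ) : Set (Idx n → ℝ) :=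
  {x | (∀ p, x p = 0 ∨ x p = 1) ∧
       ∀ (i j : Fin n) (h : i < j),
         x ⟨(i, j), le_of_lt h⟩ = x ⟨(i, i), le_refl i⟩ * x ⟨(j, j), le_refl j⟩}

/-- The set partition vertex set of a 0/1 matrix `A`. -/
def PART {r d : ℕ} (A : Fin r → Fin d → ℝ) : Set (Fin d → ℝ) :=
  {x | (∀ j, x j = 0 ∨ x j = 1) ∧ ∀ i, ∑ j, A i j * x j = 1}

/-!
Record the vertex `x_ij = s_i s_j` (`s ∈ {0,1}ⁿ`) by the indicators of the events
`{s_i = a, s_j = b}` (four for each `i < j`) and `{s_i = a}` (two for each `i`): `2n²` numbers,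
each affine in `x`, e.g. `[s_i = 0, s_j = 0] = 1 - x_ii - x_jj + x_ij`. That suitable families of
these events partition the sample space gives affine identities, and these cut out exactly the
image of this injective affine map. On the image all coordinates are `0/1` iff `x ∈ BQP_n`, by
the McCormick inequalities `x_ij ≤ x_ii, x_ij ≤ x_jj, x_ii + x_jj ≤ 1 + x_ij`. So `BQP_n` is
mapped onto a set partition vertex set, and convex hulls follow.
-/

section SetPartition

variable {ι κ : Type*}

def partVertices (S : κ → Finset ι) : Set (ι → ℝ) :=
  {y | (∀ c, y c = 0 ∨ y c = 1) ∧ ∀ ρ, ∑ c ∈ S ρ, y c = 1}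

def incidenceMatrix [DecidableEq ι] {r d : ℕ} (S : κ → Finset ι) (e : ι ≃ Fin d)
    (f : κ ≃ Fin r) : Fin r → Fin d → ℝ :=
  fun i k => if e.symm k ∈ S (f.symm i) then 1 else 0

lemma incidenceMatrix_eq_zero_or_one [DecidableEq ι] {r d : ℕ} (S : κ → Finset ι)
    (e : ι ≃ Fin d) (f : κ ≃ Fin r) (i : Fin r) (k : Fin d) :
    incidenceMatrix S e f i k = 0 ∨ incidenceMatrix S e f i k = 1 := by
  unfold incidenceMatrix
  split_ifs <;> simp

lemma PART_incidenceMatrix [Fintype ι] [DecidableEq ι] {r d : ℕ} (S : κ → Finset ι)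
    (e : ι ≃ Fin d) (f : κ ≃ Fin r) :
    PART (incidenceMatrix S e f) = LinearEquiv.funCongrLeft ℝ ℝ e.symm '' partVertices S := by
  rw [LinearEquiv.image_eq_preimage_symm]
  ext z
  have row_sum (i : Fin r) :
      ∑ k, incidenceMatrix S e f i k * z k = ∑ c ∈ S (f.symm i), z (e c) := by
    rw [← e.sum_comp]
    simp [incidenceMatrix, Finset.sum_ite_mem]
  simp only [PART, partVertices, Set.mem_ofPred_eq, Set.mem_preimage,
    LinearEquiv.funCongrLeft_symm, Equiv.symm_symm, LinearEquiv.funCongrLeft_apply,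
    LinearMap.funLeft_apply, row_sum,
    e.forall_congr_right (q := fun k => z k = 0 ∨ z k = 1),
    f.symm.forall_congr_right (q := fun ρ => ∑ c ∈ S ρ, z (e c) = 1)]

end SetPartition

lemma nonneg_of_eq_zero_or_one {a : ℝ} (h : a = 0 ∨ a = 1) : 0 ≤ a := by
  rcases h with rfl | rfl <;> norm_num

lemma eq_mul_of_mcCormick {a b c : ℝ} (ha : a = 0 ∨ a = 1) (hb : b = 0 ∨ b = 1) (hc : 0 ≤ c)
    (hca : c ≤ a) (hcb : c ≤ b) (habc : a + b ≤ 1 + c) : c = a * b := by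
  rcases ha with rfl | rfl <;> rcases hb with rfl | rfl <;> linarith

namespace Idx

variable {n : ℕ}

-- `Idx` is not reducible, so the anonymous constructor at type `Idx n` produces terms that `simp`
-- and `rw` cannot match; we always go through `ofLE`.
def ofLE {i j : Fin n} (h : i ≤ j) : Idx n := ⟨(i, j), h⟩

def diag (i : Fin n) : Idx n := ofLE (le_refl i)

end Idx

namespace BQP

open Idx

abbrev Col (n : ℕ) : Type := Fin n × Fin n × Fin 2

abbrev Row (n : ℕ) : Type := Fin n × Fin n × Fin 3

variable {n : ℕ}

/- On the vertex `x_ij = s_i s_j`: for `i < j`, `(i, j, 1)` and `(i, j, 0)` are the indicators of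
`s_i = s_j = 1` and `s_i = s_j = 0`, `(j, i, 1)` and `(j, i, 0)` those of `s_i = 1, s_j = 0` and
`s_i = 0, s_j = 1`; `(i, i, b)` is that of `s_i = b`. -/
noncomputable def embedCoord : Col n → (Idx n → ℝ) →ᵃ[ℝ] ℝ
  | (i, j, b) =>
    let X : Idx n → (Idx n → ℝ) →ᵃ[ℝ] ℝ := AffineMap.proj
    let one := AffineMap.const ℝ (Idx n → ℝ) (1 : ℝ)
    if h : i < j then
      if b = 1 then X (ofLE h.le) else one - X (diag i) - X (diag j) + X (ofLE h.le)
    else if h' : j < i then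
      if b = 1 then X (diag j) - X (ofLE h'.le) else X (diag i) - X (ofLE h'.le)
    else
      if b = 1 then X (diag i) else one - X (diag i)

variable (n) in
noncomputable def embed : (Idx n → ℝ) →ᵃ[ℝ] (Col n → ℝ) := AffineMap.pi embedCoord

/- For `i < j` the three rows are the partitions of `{0,1}²` into the four events on `(s_i, s_j)`,
into `s_i = 0` and the two events with `s_i = 1`, and into `s_j = 0` and the two with `s_j = 1`.
The rows `(i, j, t)` with `j ≤ i` all encode `s_i ∈ {0, 1}`. -/
def rowSupport : Row n → Finset (Col n)
  | (i, j, t) =>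
    if i < j then
      if t = 0 then {(i, j, 0), (i, j, 1), (j, i, 0), (j, i, 1)}
      else if t = 1 then {(i, j, 1), (j, i, 1), (i, i, 0)}
      else {(i, j, 1), (j, i, 0), (j, j, 0)}
    else {(i, i, 0), (i, i, 1)}

def coordsOf (y : Col n → ℝ) : Idx n → ℝ := fun p => y (p.1.1, p.1.2, 1)

lemma coordsOf_ofLE (y : Col n → ℝ) {i j : Fin n} (h : i ≤ j) :
    coordsOf y (ofLE h) = y (i, j, 1) :=
  rfl

lemma coordsOf_diag (y : Col n → ℝ) (i : Fin n) : coordsOf y (diag i) = y (i, i, 1) :=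
  rfl

section Evaluation

variable (x : Idx n → ℝ) {i j : Fin n}

lemma embed_apply_le_one (h : i ≤ j) : embed n x (i, j, 1) = x (ofLE h) := by
  rcases h.lt_or_eq with h | rfl
  · simp [embed, embedCoord, h]
  · simp [embed, embedCoord, diag]

lemma embed_apply_lt_zero (h : i < j) :
    embed n x (i, j, 0) = 1 - x (diag i) - x (diag j) + x (ofLE h.le) := by
  simp [embed, embedCoord, h]

lemma embed_apply_gt_one (h : i < j) :
    embed n x (j, i, 1) = x (diag i) - x (ofLE h.le) := by
  simp [embed, embedCoord, h, h.not_gt]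

lemma embed_apply_gt_zero (h : i < j) :
    embed n x (j, i, 0) = x (diag j) - x (ofLE h.le) := by
  simp [embed, embedCoord, h, h.not_gt]

lemma embed_apply_diag_one (i : Fin n) : embed n x (i, i, 1) = x (diag i) :=
  embed_apply_le_one x le_rfl

lemma embed_apply_diag_zero (i : Fin n) : embed n x (i, i, 0) = 1 - x (diag i) := by
  simp [embed, embedCoord]

end Evaluation

section RowSums

variable (y : Col n → ℝ) {i j : Fin n}

lemma sum_rowSupport_lt_zero (h : i < j) :
    ∑ c ∈ rowSupport (i, j, 0), y c =
      y (i, j, 0) + y (i, j, 1) + y (j, i, 0) + y (j, i, 1) := by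
  simp [rowSupport, h, Finset.sum_insert, h.ne, h.ne', add_assoc]

lemma sum_rowSupport_lt_one (h : i < j) :
    ∑ c ∈ rowSupport (i, j, 1), y c = y (i, j, 1) + y (j, i, 1) + y (i, i, 0) := by
  simp [rowSupport, h, Finset.sum_insert, h.ne, h.ne', add_assoc]

lemma sum_rowSupport_lt_two (h : i < j) :
    ∑ c ∈ rowSupport (i, j, 2), y c = y (i, j, 1) + y (j, i, 0) + y (j, j, 0) := by
  simp [rowSupport, h, Finset.sum_insert, h.ne, h.ne', add_assoc]

lemma sum_rowSupport_not_lt (h : ¬ i < j) (t : Fin 3) :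
    ∑ c ∈ rowSupport (i, j, t), y c = y (i, i, 0) + y (i, i, 1) := by
  simp [rowSupport, h, Finset.sum_insert]

lemma sum_rowSupport_embed (x : Idx n → ℝ) (ρ : Row n) :
    ∑ c ∈ rowSupport ρ, embed n x c = 1 := by
  obtain ⟨i, j, t⟩ := ρ
  by_cases h : i < j
  · match t with
    | 0 =>
      rw [sum_rowSupport_lt_zero _ h, embed_apply_lt_zero x h, embed_apply_le_one x h.le,
        embed_apply_gt_zero x h, embed_apply_gt_one x h]
      ring
    | 1 =>
      rw [sum_rowSupport_lt_one _ h, embed_apply_le_one x h.le, embed_apply_gt_one x h,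
        embed_apply_diag_zero]
      ring
    | 2 =>
      rw [sum_rowSupport_lt_two _ h, embed_apply_le_one x h.le, embed_apply_gt_zero x h,
        embed_apply_diag_zero]
      ring
  · rw [sum_rowSupport_not_lt _ h, embed_apply_diag_zero, embed_apply_diag_one]
    ring

end RowSums

lemma forall_col {P : Col n → Prop} :
    (∀ c, P c) ↔ (∀ i, P (i, i, 0) ∧ P (i, i, 1)) ∧
      ∀ i j, i < j → P (i, j, 0) ∧ P (i, j, 1) ∧ P (j, i, 0) ∧ P (j, i, 1) := by
  refine ⟨fun hP => ⟨fun _ => ⟨hP _, hP _⟩, fun _ _ _ => ⟨hP _, hP _, hP _, hP _⟩⟩, ?_⟩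
  rintro ⟨hdiag, hoff⟩ ⟨i, j, b⟩
  rcases lt_trichotomy i j with h | rfl | h
  · obtain ⟨h0, h1, -, -⟩ := hoff i j h
    match b with
    | 0 => exact h0
    | 1 => exact h1
  · obtain ⟨h0, h1⟩ := hdiag i
    match b with
    | 0 => exact h0
    | 1 => exact h1
  · obtain ⟨-, -, h0, h1⟩ := hoff j i h
    match b with
    | 0 => exact h0
    | 1 => exact h1

lemma coordsOf_embed (x : Idx n → ℝ) : coordsOf (embed n x) = x := by
  funext ⟨⟨i, j⟩, h⟩
  exact embed_apply_le_one x h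

lemma embed_injective : Function.Injective (embed n) :=
  Function.LeftInverse.injective coordsOf_embed

lemma embed_coordsOf {y : Col n → ℝ} (hy : ∀ ρ, ∑ c ∈ rowSupport ρ, y c = 1) :
    embed n (coordsOf y) = y := by
  have hdiag (i : Fin n) : y (i, i, 0) + y (i, i, 1) = 1 := by
    simpa only [sum_rowSupport_not_lt y (lt_irrefl i) 0] using hy (i, i, 0)
  funext c
  revert c
  refine forall_col.2 ⟨fun i => ?_, fun i j h => ?_⟩
  · rw [embed_apply_diag_zero, embed_apply_diag_one, coordsOf_diag]
    exact ⟨by linarith [hdiag i], rfl⟩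
  · have row0 := hy (i, j, 0)
    have row1 := hy (i, j, 1)
    have row2 := hy (i, j, 2)
    rw [sum_rowSupport_lt_zero y h] at row0
    rw [sum_rowSupport_lt_one y h] at row1
    rw [sum_rowSupport_lt_two y h] at row2
    rw [embed_apply_lt_zero _ h, embed_apply_le_one _ h.le, embed_apply_gt_zero _ h,
      embed_apply_gt_one _ h, coordsOf_diag, coordsOf_diag, coordsOf_ofLE]
    exact ⟨by linarith [hdiag i, hdiag j], rfl, by linarith [hdiag j], by linarith [hdiag i]⟩

lemma mem_iff {x : Idx n → ℝ} :
    x ∈ BQP n ↔ (∀ p, x p = 0 ∨ x p = 1) ∧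
      ∀ i j (h : i < j), x (ofLE h.le) = x (diag i) * x (diag j) :=
  Iff.rfl

lemma embed_eq_zero_or_one_iff (x : Idx n → ℝ) :
    (∀ c, embed n x c = 0 ∨ embed n x c = 1) ↔ x ∈ BQP n := by
  rw [mem_iff]
  constructor
  · intro h01
    have hx (p : Idx n) : x p = 0 ∨ x p = 1 := by
      rw [← coordsOf_embed x]
      exact h01 _
    refine ⟨hx, fun i j h => eq_mul_of_mcCormick (hx _) (hx _) (nonneg_of_eq_zero_or_one (hx _))
      ?_ ?_ ?_⟩
    · have := nonneg_of_eq_zero_or_one (h01 (j, i, 1))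
      rw [embed_apply_gt_one x h] at this
      linarith
    · have := nonneg_of_eq_zero_or_one (h01 (j, i, 0))
      rw [embed_apply_gt_zero x h] at this
      linarith
    · have := nonneg_of_eq_zero_or_one (h01 (i, j, 0))
      rw [embed_apply_lt_zero x h] at this
      linarith
  · rintro ⟨hx, hmul⟩
    refine forall_col.2 ⟨fun i => ?_, fun i j h => ?_⟩
    · rw [embed_apply_diag_zero, embed_apply_diag_one]
      rcases hx (diag i) with hi | hi <;> simp [hi]
    · rw [embed_apply_lt_zero x h, embed_apply_le_one x h.le, embed_apply_gt_zero x h,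
        embed_apply_gt_one x h, hmul i j h]
      rcases hx (diag i) with hi | hi <;> rcases hx (diag j) with hj | hj <;> simp [hi, hj]

lemma image_embed : embed n '' BQP n = partVertices (rowSupport (n := n)) := by
  ext y
  constructor
  · rintro ⟨x, hx, rfl⟩
    exact ⟨(embed_eq_zero_or_one_iff x).2 hx, sum_rowSupport_embed x⟩
  · rintro ⟨h01, hrow⟩
    refine ⟨coordsOf y, ?_, embed_coordsOf hrow⟩
    rw [← embed_eq_zero_or_one_iff, embed_coordsOf hrow]
    exact h01

end BQP

theorem stmt17_general (n : ℕ) :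
    ∃ (r : ℕ) (A : Fin r → Fin (2 * n ^ 2) → ℝ),
      (∀ i j, A i j = 0 ∨ A i j = 1) ∧
      ∃ φ : (Idx n → ℝ) →ᵃ[ℝ] (Fin (2 * n ^ 2) → ℝ),
        Function.Injective φ ∧
        φ '' (convexHull ℝ (BQP n)) = convexHull ℝ (PART A) := by
  let e : BQP.Col n ≃ Fin (2 * n ^ 2) :=
    Fintype.equivFinOfCardEq (by simp only [Fintype.card_prod, Fintype.card_fin]; ring)
  let f : BQP.Row n ≃ Fin (3 * n ^ 2) :=
    Fintype.equivFinOfCardEq (by simp only [Fintype.card_prod, Fintype.card_fin]; ring)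
  let reindex := LinearEquiv.funCongrLeft ℝ ℝ e.symm
  refine ⟨3 * n ^ 2, incidenceMatrix BQP.rowSupport e f, incidenceMatrix_eq_zero_or_one _ e f,
    reindex.toLinearMap.toAffineMap.comp (BQP.embed n), ?_, ?_⟩
  · exact reindex.injective.comp BQP.embed_injective
  · rw [AffineMap.image_convexHull, AffineMap.coe_comp, Set.image_comp, BQP.image_embed,
      PART_incidenceMatrix]
    rfl

/-- For every `n ≥ 1` there is a 0/1 matrix `A` with `d = 2n²` columns such that
`conv(BQP_n)` is affinely equivalent to the set partition polytope `conv(PART(A))`. -/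
theorem stmt17 (n : ℕ) (hn : 1 ≤ n) :
    ∃ (r : ℕ) (A : Fin r → Fin (2 * n ^ 2) → ℝ),
      (∀ i j, A i j = 0 ∨ A i j = 1) ∧
      ∃ φ : (Idx n → ℝ) →ᵃ[ℝ] (Fin (2 * n ^ 2) → ℝ),
        Function.Injective φ ∧
        φ '' (convexHull ℝ (BQP n)) = convexHull ℝ (PART A) :=
  stmt17_general n
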